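/- arXiv:0909.2796 — 2 statements merged into one kernel-verified Lean document; each statement's English description precedes it below -/
import Mathlib

section
/- In the setting of the thin-domain Korn estimate: if A : (-L,L) → ℝ^{2×2} is piecewise constant on intervals of length ℓ_h ≈ h, skew-symmetric valued, and satisfies the difference estimate ∫_{(a,a+ℓ_h)×(-h/2,h/2)} |A(x₁+ℓ_h) - A(x₁)|² dx ≤ C ∫_{(a,a+2ℓ_h)×(-h/2,h/2)} |ε(u)|² dx for each grid point a, then ∫_{Ω_h} |A(x₁) - A(-L)|² dx ≤ C' N_h² ∫_{Ω_h} |ε(u)|² dx, where N_h ≈ 2L/h is the number of intervals. -/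
/- Telescoping `B k - B 0` along the grid and applying Cauchy–Schwarz to the `k` increments gives
`|B k - B 0|² ≤ k ∑_{m<k} |B (m+1) - B m|² ≤ k C ∑_{m<k} (e m + e (m+1))`. In the last sum each
local energy occurs at most twice, so every term is at most `2 C N ∑ e`, and there are `N` terms. -/

open Matrix Finset

theorem sq_dist_le_mul_sum_sq_dist {α : Type*} [PseudoMetricSpace α] (x : ℕ → α) (k : ℕ) :
    dist (x 0) (x k) ^ 2 ≤ k * ∑ m ∈ range k, dist (x m) (x (m + 1)) ^ 2 := by
  calc dist (x 0) (x k) ^ 2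
      ≤ (∑ m ∈ range k, dist (x m) (x (m + 1))) ^ 2 := by
        gcongr
        exact dist_le_range_sum_dist x k
    _ ≤ k * ∑ m ∈ range k, dist (x m) (x (m + 1)) ^ 2 := by
        simpa using sq_sum_le_card_mul_sum_sq (s := range k)

theorem Matrix.sum_sq_sub_apply_le {m n : Type*} [Fintype m] [Fintype n]
    (B : ℕ → Matrix m n ℝ) (k : ℕ) :
    ∑ i, ∑ j, ((B k - B 0) i j) ^ 2
      ≤ k * ∑ l ∈ range k, ∑ i, ∑ j, ((B (l + 1) - B l) i j) ^ 2 := by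
  have entry (i : m) (j : n) :
      ((B k - B 0) i j) ^ 2 ≤ k * ∑ l ∈ range k, ((B (l + 1) - B l) i j) ^ 2 := by
    simpa [Real.dist_eq, sq_abs, sub_sq_comm] using
      sq_dist_le_mul_sum_sq_dist (fun l => B l i j) k
  calc ∑ i, ∑ j, ((B k - B 0) i j) ^ 2
      ≤ ∑ i, ∑ j, k * ∑ l ∈ range k, ((B (l + 1) - B l) i j) ^ 2 := by
        gcongr with i _ j _
        exact entry i j
    _ = k * ∑ l ∈ range k, ∑ i, ∑ j, ((B (l + 1) - B l) i j) ^ 2 := by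
        simp only [← mul_sum]
        congr 1
        exact (sum_congr rfl fun i _ => sum_comm).trans sum_comm

theorem sum_range_add_succ_le_two_mul_sum {e : ℕ → ℝ} (he : ∀ k, 0 ≤ e k) {k N : ℕ}
    (hk : k < N) :
    ∑ m ∈ range k, (e m + e (m + 1)) ≤ 2 * ∑ m ∈ range N, e m := by
  have h_left : ∑ m ∈ range k, e m ≤ ∑ m ∈ range N, e m :=
    sum_le_sum_of_subset_of_nonneg (range_subset_range.2 hk.le) fun m _ _ => he m
  have h_right : ∑ m ∈ range k, e (m + 1) ≤ ∑ m ∈ range N, e m := by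
    have h_succ : ∑ m ∈ range (k + 1), e m ≤ ∑ m ∈ range N, e m :=
      sum_le_sum_of_subset_of_nonneg (range_subset_range.2 hk) fun m _ _ => he m
    rw [sum_range_succ'] at h_succ
    linarith [he 0]
  rw [sum_add_distrib]
  linarith

theorem stmt9_general (C : ℝ) (hC : 0 ≤ C) (N : ℕ)
    (B : ℕ → Matrix (Fin 2) (Fin 2) ℝ) (e : ℕ → ℝ)
    (he : ∀ k, 0 ≤ e k)
    (hdiff : ∀ k, k + 1 < N →
      ∑ i, ∑ j, ((B (k + 1) - B k) i j) ^ 2 ≤ C * (e k + e (k + 1))) :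
    ∑ k ∈ Finset.range N, ∑ i, ∑ j, ((B k - B 0) i j) ^ 2
      ≤ 2 * C * (N : ℝ) ^ 2 * ∑ k ∈ Finset.range N, e k := by
  have h_term : ∀ k ∈ range N,
      ∑ i, ∑ j, ((B k - B 0) i j) ^ 2 ≤ N * (C * (2 * ∑ k ∈ range N, e k)) := by
    intro k hk
    have hk : k < N := mem_range.1 hk
    calc ∑ i, ∑ j, ((B k - B 0) i j) ^ 2
        ≤ k * ∑ m ∈ range k, ∑ i, ∑ j, ((B (m + 1) - B m) i j) ^ 2 :=
          Matrix.sum_sq_sub_apply_le B k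
      _ ≤ k * ∑ m ∈ range k, C * (e m + e (m + 1)) := by
          gcongr with m hm
          exact hdiff m (by rw [mem_range] at hm; omega)
      _ ≤ N * (C * (2 * ∑ k ∈ range N, e k)) := by
          rw [← mul_sum]
          gcongr
          · exact mul_nonneg hC (sum_nonneg fun m _ => add_nonneg (he m) (he (m + 1)))
          · exact sum_range_add_succ_le_two_mul_sum he hk
  calc ∑ k ∈ range N, ∑ i, ∑ j, ((B k - B 0) i j) ^ 2
      ≤ #(range N) • (N * (C * (2 * ∑ k ∈ range N, e k))) := sum_le_card_nsmul _ _ _ h_term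
    _ = 2 * C * (N : ℝ) ^ 2 * ∑ k ∈ range N, e k := by
        rw [card_range, nsmul_eq_mul]
        ring

theorem stmt9 (C : ℝ) (hC : 0 ≤ C) (N : ℕ)
    (B : ℕ → Matrix (Fin 2) (Fin 2) ℝ) (e : ℕ → ℝ)
    (hBskew : ∀ k, (B k)ᵀ = -(B k))
    (he : ∀ k, 0 ≤ e k)
    (hdiff : ∀ k, k + 1 < N →
      ∑ i, ∑ j, ((B (k + 1) - B k) i j) ^ 2 ≤ C * (e k + e (k + 1))) :
    ∑ k ∈ Finset.range N, ∑ i, ∑ j, ((B k - B 0) i j) ^ 2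
      ≤ 2 * C * (N : ℝ) ^ 2 * ∑ k ∈ Finset.range N, e k :=
  stmt9_general C hC N B e he hdiff
end

section
/- Let W : B_r(I) ⊂ ℝ^{d×d} → ℝ be smooth and frame invariant (W(RF) = W(F) for all R ∈ SO(d)), and set W̃(G) = W(I+G). Then there exist ε > 0, C > 0, and a smooth map A ∈ C^∞(B̄_ε(0); L³(ℝ^{d×d})) such that for |G| ≤ ε, D³W̃(G) = D³W̃(0) + A(G), where |A(G)| ≤ C|G| and, crucially, |D³W̃(0)|_h ≤ C h for all 0 < h ≤ 1 (the scaled norm |·|_h being induced by |A|_h² = h^{-2}|sym A|² + |skew A|²). -/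
/- STATEMENT 14: structure of D³W̃ for frame-invariant W, W̃(G) = W(I+G): there are ε, C > 0
and a smooth map A on B̄_ε(0) with values in trilinear forms such that
D³W̃(G) = D³W̃(0) + A(G), with |A(G)| ≤ C|G| and the scaled-norm bound |D³W̃(0)|_h ≤ Ch
for all 0 < h ≤ 1. -/

open Matrix
noncomputable section
set_option maxHeartbeats 1000000

attribute [local instance] Matrix.frobeniusNormedAddCommGroup Matrix.frobeniusNormedSpace

instance frobTopology {d : ℕ} : TopologicalSpace (Matrix (Fin d) (Fin d) ℝ) :=
  (Matrix.frobeniusNormedAddCommGroup : NormedAddCommGroup (Matrix (Fin d) (Fin d) ℝ)).toUniformSpace.toTopologicalSpace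

variable {d : ℕ}

def frobInner (A B : Matrix (Fin d) (Fin d) ℝ) : ℝ := ∑ i, ∑ j, A i j * B i j

def symPart (A : Matrix (Fin d) (Fin d) ℝ) : Matrix (Fin d) (Fin d) ℝ := (1 / 2 : ℝ) • (A + Aᵀ)

def skewPart (A : Matrix (Fin d) (Fin d) ℝ) : Matrix (Fin d) (Fin d) ℝ := (1 / 2 : ℝ) • (A - Aᵀ)

/-- scaled norm `|A|_h`, `|A|_h² = h⁻²|sym A|² + |skew A|²`. -/
def hNorm (h : ℝ) (A : Matrix (Fin d) (Fin d) ℝ) : ℝ :=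
  Real.sqrt (h⁻¹ ^ 2 * frobInner (symPart A) (symPart A) + frobInner (skewPart A) (skewPart A))

/-- scaled norm of a (continuous) trilinear form on matrices. -/
def hNorm3 (h : ℝ)
    (T : ContinuousMultilinearMap ℝ (fun _ : Fin 3 => Matrix (Fin d) (Fin d) ℝ) ℝ) : ℝ :=
  sSup {y : ℝ | ∃ A : Fin 3 → Matrix (Fin d) (Fin d) ℝ,
    (∀ j, hNorm h (A j) ≤ 1) ∧ y = |T A|}

/-! ### Auxiliary lemmas -/

section Aux

attribute [local instance] Matrix.frobeniusNormedRing

lemma frobInner_self (A : Matrix (Fin d) (Fin d) ℝ) : frobInner A A = ‖A‖ ^ 2 := by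
  have hnn : (0:ℝ) ≤ ∑ i, ∑ j, ‖A i j‖ ^ (2:ℝ) := by positivity
  rw [Matrix.frobenius_norm_def, ← Real.rpow_natCast ((∑ i, ∑ j, ‖A i j‖ ^ (2:ℝ)) ^ (1/2:ℝ)) 2,
    ← Real.rpow_mul hnn]
  norm_num
  rw [frobInner]
  exact Finset.sum_congr rfl fun i _ => Finset.sum_congr rfl fun j _ => by
    rw [pow_two]

lemma hNorm_bounds {h : ℝ} (hh : 0 < h) {A : Matrix (Fin d) (Fin d) ℝ} (hA : hNorm h A ≤ 1) :
    ‖symPart A‖ ≤ h ∧ ‖skewPart A‖ ≤ 1 := by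
  rw [hNorm] at hA
  set E : ℝ := h⁻¹ ^ 2 * frobInner (symPart A) (symPart A)
      + frobInner (skewPart A) (skewPart A) with hEdef
  have hE : (0:ℝ) ≤ E := by
    rw [hEdef, frobInner_self, frobInner_self]; positivity
  have hE1 : E ≤ 1 := by
    have h1 := Real.sq_sqrt hE
    have h2 := Real.sqrt_nonneg E
    nlinarith
  rw [hEdef, frobInner_self, frobInner_self] at hE1
  have hsym2 : ‖symPart A‖ ^ 2 ≤ h ^ 2 := by
    have h1 : h⁻¹ ^ 2 * ‖symPart A‖ ^ 2 ≤ 1 := by nlinarith [sq_nonneg ‖skewPart A‖]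
    have h2 : (0:ℝ) < h ^ 2 := by positivity
    rw [inv_pow] at h1
    have := (inv_mul_le_iff₀ h2).mp h1
    linarith
  have hskew2 : ‖skewPart A‖ ^ 2 ≤ 1 := by
    have : (0:ℝ) ≤ h⁻¹ ^ 2 * ‖symPart A‖ ^ 2 := by positivity
    linarith
  constructor
  · have := Real.sqrt_le_sqrt hsym2
    rwa [Real.sqrt_sq (norm_nonneg _), Real.sqrt_sq hh.le] at this
  · have := Real.sqrt_le_sqrt hskew2
    rwa [Real.sqrt_sq (norm_nonneg _), Real.sqrt_one] at this

lemma sym_add_skew (X : Matrix (Fin d) (Fin d) ℝ) : symPart X + skewPart X = X := by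
  have h1 : (X + Xᵀ) + (X - Xᵀ) = X + X := by abel
  rw [symPart, skewPart, ← smul_add, h1, ← two_smul ℝ X, smul_smul]
  norm_num

lemma skewPart_skew (X : Matrix (Fin d) (Fin d) ℝ) : (skewPart X)ᵀ = -(skewPart X) := by
  rw [skewPart, transpose_smul, transpose_sub, transpose_transpose, ← smul_neg, neg_sub]

/-- Frame invariance implies evenness along skew directions (via the Cayley transform). -/
lemma frame_even {r : ℝ} {W : Matrix (Fin d) (Fin d) ℝ → ℝ}
    (hframe : ∀ R F : Matrix (Fin d) (Fin d) ℝ, Rᵀ * R = 1 → R.det = 1 →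
      F ∈ Metric.ball (1 : Matrix (Fin d) (Fin d) ℝ) r →
      R * F ∈ Metric.ball (1 : Matrix (Fin d) (Fin d) ℝ) r →
      W (R * F) = W F)
    {S : Matrix (Fin d) (Fin d) ℝ} (hS : Sᵀ = -S) (hr' : ‖S‖ < r) (h1 : ‖S‖ < 1) :
    W (1 + S) = W (1 - S) := by
  set B : Matrix (Fin d) (Fin d) ℝ := 1 + S with hB
  have hU : IsUnit B := by
    have := (Units.oneSub (-S) (by simpa using h1)).isUnit
    simpa [sub_neg_eq_add] using this
  have hdet : IsUnit B.det := (Matrix.isUnit_iff_isUnit_det _).mp hU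
  have hBt : Bᵀ = 1 - S := by
    rw [hB, transpose_add, transpose_one, hS, sub_eq_add_neg]
  have hBB : B * B⁻¹ = 1 := Matrix.mul_nonsing_inv B hdet
  have hBB' : B⁻¹ * B = 1 := Matrix.nonsing_inv_mul B hdet
  have hcomm : B * Bᵀ = Bᵀ * B := by
    rw [hBt, hB]
    noncomm_ring
  set R : Matrix (Fin d) (Fin d) ℝ := Bᵀ * B⁻¹ with hR
  have hRt : Rᵀ = (B⁻¹)ᵀ * B := by rw [hR, transpose_mul, transpose_transpose]
  have hcond1 : Rᵀ * R = 1 := by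
    rw [hRt, hR]
    calc (B⁻¹)ᵀ * B * (Bᵀ * B⁻¹) = (B⁻¹)ᵀ * (B * Bᵀ) * B⁻¹ := by
          simp only [Matrix.mul_assoc]
      _ = (B⁻¹)ᵀ * (Bᵀ * B) * B⁻¹ := by rw [hcomm]
      _ = ((B⁻¹)ᵀ * Bᵀ) * (B * B⁻¹) := by simp only [Matrix.mul_assoc]
      _ = (B * B⁻¹)ᵀ * (B * B⁻¹) := by rw [transpose_mul]
      _ = 1 := by rw [hBB, transpose_one, Matrix.one_mul]
  have hdetR : R.det = 1 := by
    rw [hR, det_mul, det_transpose, Matrix.det_nonsing_inv]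
    exact Ring.mul_inverse_cancel _ hdet
  have hRB : R * B = 1 - S := by
    rw [hR, Matrix.mul_assoc, hBB', Matrix.mul_one, hBt]
  have hmem1 : B ∈ Metric.ball (1 : Matrix (Fin d) (Fin d) ℝ) r := by
    simp [hB, Metric.mem_ball, dist_eq_norm, hr']
  have hmem2 : R * B ∈ Metric.ball (1 : Matrix (Fin d) (Fin d) ℝ) r := by
    rw [hRB]
    simpa [Metric.mem_ball, dist_eq_norm] using hr'
  have := hframe R B hcond1 hdetR hmem1 hmem2
  rw [hRB] at this
  exact this.symm

/-- The third derivative of `W̃` at `0` vanishes on triples of skew matrices. -/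
lemma skew_vanish (r : ℝ) (hr : 0 < r) (W : Matrix (Fin d) (Fin d) ℝ → ℝ)
    (hW : ContDiffOn ℝ (⊤ : ℕ∞) W (Metric.ball (1 : Matrix (Fin d) (Fin d) ℝ) r))
    (heven : ∀ S : Matrix (Fin d) (Fin d) ℝ, Sᵀ = -S → ‖S‖ < r → ‖S‖ < 1 →
      W (1 + S) = W (1 - S))
    (S : Fin 3 → Matrix (Fin d) (Fin d) ℝ) (hS : ∀ i, (S i)ᵀ = -(S i)) :
    iteratedFDeriv ℝ 3 (fun G => W (1 + G)) 0 S = 0 := by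
  classical
  set Wt : Matrix (Fin d) (Fin d) ℝ → ℝ := fun G => W (1 + G) with hWtdef
  have hWt : ContDiffOn ℝ (⊤ : ℕ∞) Wt (Metric.ball (0 : Matrix (Fin d) (Fin d) ℝ) r) := by
    refine hW.comp ((contDiff_const.add contDiff_id).contDiffOn) ?_
    intro G hG
    simpa [Metric.mem_ball, dist_eq_norm, add_sub_cancel_left] using hG
  set L : (Fin 3 → ℝ) →L[ℝ] Matrix (Fin d) (Fin d) ℝ :=
    ∑ i : Fin 3, (ContinuousLinearMap.proj i).smulRight (S i) with hLdef
  have hL : ∀ t, L t = ∑ i : Fin 3, t i • S i := by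
    intro t
    simp [hLdef, ContinuousLinearMap.sum_apply]
  have hLskew : ∀ t, (L t)ᵀ = -(L t) := by
    intro t
    simp only [hL, transpose_sum, transpose_smul, hS]
    simp [Finset.sum_neg_distrib]
  set s : Set (Matrix (Fin d) (Fin d) ℝ) := Metric.ball 0 r with hsdef
  have hs : IsOpen s := Metric.isOpen_ball
  have h0s : (0 : Matrix (Fin d) (Fin d) ℝ) ∈ s := by simp [hsdef, hr]
  have hL00 : L 0 = 0 := by simp
  have hs1 : IsOpen (L ⁻¹' s) := hs.preimage L.continuous
  have hs2 : IsOpen ((-L) ⁻¹' s) := hs.preimage (-L).continuous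
  have h01 : (0 : Fin 3 → ℝ) ∈ L ⁻¹' s := by simp [hL00, h0s]
  have h02 : (0 : Fin 3 → ℝ) ∈ (-L) ⁻¹' s := by simp [hL00, h0s]
  have e1 : iteratedFDeriv ℝ 3 (Wt ∘ L) 0 =
      (iteratedFDeriv ℝ 3 Wt 0).compContinuousLinearMap fun _ => L := by
    have := L.iteratedFDerivWithin_comp_right (f := Wt) hWt hs.uniqueDiffOn hs1.uniqueDiffOn
      (x := 0) (by simpa [hL00] using h0s) (i := 3) (WithTop.coe_le_coe.mpr le_top)
    rwa [iteratedFDerivWithin_of_isOpen _ hs1 h01,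
      iteratedFDerivWithin_of_isOpen _ hs (by simpa [hL00] using h0s), hL00] at this
  have e2 : iteratedFDeriv ℝ 3 (Wt ∘ (-L)) 0 =
      (iteratedFDeriv ℝ 3 Wt 0).compContinuousLinearMap fun _ => -L := by
    have := (-L).iteratedFDerivWithin_comp_right (f := Wt) hWt hs.uniqueDiffOn hs2.uniqueDiffOn
      (x := 0) (by simp [hL00, h0s]) (i := 3) (WithTop.coe_le_coe.mpr le_top)
    rwa [iteratedFDerivWithin_of_isOpen _ hs2 h02,
      iteratedFDerivWithin_of_isOpen _ hs (by simp [hL00, h0s]),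
      show (-L) (0 : Fin 3 → ℝ) = 0 by simp] at this
  have heq : (Wt ∘ L) =ᶠ[nhds (0 : Fin 3 → ℝ)] (Wt ∘ (-L)) := by
    have hU : IsOpen (L ⁻¹' {X : Matrix (Fin d) (Fin d) ℝ | ‖X‖ < min r 1}) := by
      refine IsOpen.preimage L.continuous ?_
      have : {X : Matrix (Fin d) (Fin d) ℝ | ‖X‖ < min r 1} = Metric.ball 0 (min r 1) := by
        ext X; simp [Metric.mem_ball, dist_eq_norm]
      rw [this]; exact Metric.isOpen_ball
    have h0U : (0 : Fin 3 → ℝ) ∈ L ⁻¹' {X | ‖X‖ < min r 1} := by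
      simp [hL00, hr]
    filter_upwards [hU.mem_nhds h0U] with t ht
    have h1 : ‖L t‖ < r := lt_of_lt_of_le ht (min_le_left _ _)
    have h2 : ‖L t‖ < 1 := lt_of_lt_of_le ht (min_le_right _ _)
    have := heven (L t) (hLskew t) h1 h2
    simpa [Wt, sub_eq_add_neg] using this
  have e3 : iteratedFDeriv ℝ 3 (Wt ∘ L) 0 = iteratedFDeriv ℝ 3 (Wt ∘ (-L)) 0 := by
    have heq' : (Wt ∘ L) =ᶠ[nhdsWithin (0 : Fin 3 → ℝ) Set.univ] (Wt ∘ (-L)) := by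
      rwa [nhdsWithin_univ]
    have := Filter.EventuallyEq.iteratedFDerivWithin_eq (𝕜 := ℝ) heq' heq.self_of_nhds 3
    rwa [iteratedFDerivWithin_univ, iteratedFDerivWithin_univ] at this
  have hLm : ∀ i : Fin 3, L (Pi.single i (1 : ℝ)) = S i := by
    intro i
    rw [hL]
    rw [Finset.sum_eq_single i]
    · simp
    · intro j _ hj; simp [Pi.single_apply, hj]
    · simp
  have key := congrArg (fun T => T (fun i : Fin 3 => Pi.single i (1 : ℝ)))
    (e1.symm.trans (e3.trans e2))
  simp only [ContinuousMultilinearMap.compContinuousLinearMap_apply,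
    ContinuousLinearMap.neg_apply, hLm] at key
  have hneg : (fun i : Fin 3 => -(S i)) = fun i : Fin 3 => (-1 : ℝ) • S i := by
    funext i; simp
  rw [hneg, (iteratedFDeriv ℝ 3 Wt 0).map_smul_univ] at key
  simp only [Finset.prod_const, Finset.card_univ, Fintype.card_fin] at key
  have hcube : ((-1 : ℝ) ^ 3) • (iteratedFDeriv ℝ 3 Wt 0) S
      = -((iteratedFDeriv ℝ 3 Wt 0) S) := by norm_num
  rw [hcube] at key
  linarith [key]

end Aux

theorem stmt14 (d : ℕ) (r : ℝ) (hr : 0 < r)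
    (W : Matrix (Fin d) (Fin d) ℝ → ℝ)
    (hW : ContDiffOn ℝ (⊤ : ℕ∞) W (Metric.ball (1 : Matrix (Fin d) (Fin d) ℝ) r))
    (hframe : ∀ R F : Matrix (Fin d) (Fin d) ℝ, Rᵀ * R = 1 → R.det = 1 →
      F ∈ Metric.ball (1 : Matrix (Fin d) (Fin d) ℝ) r →
      R * F ∈ Metric.ball (1 : Matrix (Fin d) (Fin d) ℝ) r →
      W (R * F) = W F) :
    ∃ ε > (0 : ℝ), ∃ C > (0 : ℝ),
      ∃ A : Matrix (Fin d) (Fin d) ℝ →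
          ContinuousMultilinearMap ℝ (fun _ : Fin 3 => Matrix (Fin d) (Fin d) ℝ) ℝ,
        ContDiffOn ℝ (⊤ : ℕ∞) A (Metric.closedBall 0 ε) ∧
        (∀ G : Matrix (Fin d) (Fin d) ℝ, ‖G‖ ≤ ε →
          iteratedFDeriv ℝ 3 (fun G' => W (1 + G')) G
            = iteratedFDeriv ℝ 3 (fun G' => W (1 + G')) 0 + A G) ∧
        (∀ G : Matrix (Fin d) (Fin d) ℝ, ‖G‖ ≤ ε → ‖A G‖ ≤ C * ‖G‖) ∧
        (∀ h : ℝ, 0 < h → h ≤ 1 →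
          hNorm3 h (iteratedFDeriv ℝ 3 (fun G' => W (1 + G')) 0) ≤ C * h) := by
  classical
  set Wt : Matrix (Fin d) (Fin d) ℝ → ℝ := fun G => W (1 + G) with hWtdef
  set F : Matrix (Fin d) (Fin d) ℝ →
      ContinuousMultilinearMap ℝ (fun _ : Fin 3 => Matrix (Fin d) (Fin d) ℝ) ℝ :=
    fun G => iteratedFDeriv ℝ 3 Wt G with hFdef
  have hWt : ContDiffOn ℝ (⊤ : ℕ∞) Wt (Metric.ball (0 : Matrix (Fin d) (Fin d) ℝ) r) := by
    refine hW.comp ((contDiff_const.add contDiff_id).contDiffOn) ?_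
    intro G hG
    simpa [Metric.mem_ball, dist_eq_norm, add_sub_cancel_left] using hG
  have hFat : ∀ x ∈ Metric.ball (0 : Matrix (Fin d) (Fin d) ℝ) r, ContDiffAt ℝ (⊤ : ℕ∞) F x := by
    intro x hx
    exact (hWt.contDiffAt (Metric.isOpen_ball.mem_nhds hx)).iteratedFDeriv_right (WithTop.coe_le_coe.mpr le_top)
  set ε : ℝ := r / 2 with hεdef
  have hε : 0 < ε := by positivity
  have hsub : Metric.closedBall (0 : Matrix (Fin d) (Fin d) ℝ) ε ⊆ Metric.ball 0 r := by
    intro x hx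
    rw [Metric.mem_closedBall] at hx
    rw [Metric.mem_ball]
    linarith
  set T0 : ContinuousMultilinearMap ℝ (fun _ : Fin 3 => Matrix (Fin d) (Fin d) ℝ) ℝ := F 0
    with hT0def
  -- bound on the derivative of F on the closed ball
  have hF1 : ContDiffOn ℝ 1 F (Metric.ball (0 : Matrix (Fin d) (Fin d) ℝ) r) :=
    fun x hx => ((hFat x hx).of_le (by simp)).contDiffWithinAt
  have hcont : ContinuousOn (fderiv ℝ F) (Metric.closedBall (0 : Matrix (Fin d) (Fin d) ℝ) ε) :=
    (hF1.continuousOn_fderiv_of_isOpen Metric.isOpen_ball le_rfl).mono hsub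
  obtain ⟨M, hM⟩ := (isCompact_closedBall (0 : Matrix (Fin d) (Fin d) ℝ) ε).exists_bound_of_continuousOn (f := fderiv ℝ F) (by exact hcont)
  set C : ℝ := max M 0 + 8 * ‖T0‖ + 1 with hCdef
  have hC : 0 < C := by
    have h1 : (0:ℝ) ≤ max M 0 := le_max_right _ _
    have h2 : (0:ℝ) ≤ ‖T0‖ := norm_nonneg _
    nlinarith
  refine ⟨ε, hε, C, hC, fun G => F G - F 0, ?_, ?_, ?_, ?_⟩
  · -- smoothness
    intro x hx
    have hx' : x ∈ Metric.ball (0 : Matrix (Fin d) (Fin d) ℝ) r := hsub hx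
    exact ((hFat x hx').sub contDiffAt_const).contDiffWithinAt
  · -- equality
    intro G hG
    show F G = F 0 + (F G - F 0)
    abel
  · -- Lipschitz bound
    intro G hG
    have hGmem : G ∈ Metric.closedBall (0 : Matrix (Fin d) (Fin d) ℝ) ε := by
      rwa [Metric.mem_closedBall, dist_zero_right]
    have h0mem : (0 : Matrix (Fin d) (Fin d) ℝ) ∈ Metric.closedBall (0 : Matrix (Fin d) (Fin d) ℝ) ε :=
      Metric.mem_closedBall_self hε.le
    have hdiff : ∀ x ∈ Metric.closedBall (0 : Matrix (Fin d) (Fin d) ℝ) ε,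
        DifferentiableAt ℝ F x := fun x hx => (hFat x (hsub hx)).differentiableAt (by simp)
    have := (convex_closedBall (0 : Matrix (Fin d) (Fin d) ℝ) ε).norm_image_sub_le_of_norm_fderiv_le
      hdiff hM h0mem hGmem
    rw [sub_zero] at this
    calc ‖F G - F 0‖ ≤ M * ‖G‖ := this
      _ ≤ C * ‖G‖ := by
          have h1 : M ≤ C := by
            have h2 : (0:ℝ) ≤ ‖T0‖ := norm_nonneg _
            have h3 : M ≤ max M 0 := le_max_left _ _
            nlinarith
          exact mul_le_mul_of_nonneg_right h1 (norm_nonneg _)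
  · -- the h-norm bound
    intro h hh hh1
    have hCh : (0:ℝ) ≤ C * h := by positivity
    refine Real.sSup_le ?_ hCh
    rintro y ⟨A, hA, rfl⟩
    set m : Fin 3 → Matrix (Fin d) (Fin d) ℝ := fun j => symPart (A j) with hmdef
    set m' : Fin 3 → Matrix (Fin d) (Fin d) ℝ := fun j => skewPart (A j) with hm'def
    have hmm' : m + m' = A := by
      funext j
      exact sym_add_skew (A j)
    have hsum : T0 A = ∑ s : Finset (Fin 3), T0 (s.piecewise m m') := by
      have := T0.toMultilinearMap.map_add_univ m m'
      simpa [hmm'] using this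
    have hterm : ∀ s : Finset (Fin 3), |T0 (s.piecewise m m')| ≤ ‖T0‖ * h := by
      intro s
      rcases s.eq_empty_or_nonempty with hs | ⟨i₀, hi₀⟩
      · have : T0 (s.piecewise m m') = 0 := by
          rw [hs, Finset.piecewise_empty]
          exact skew_vanish r hr W hW
            (fun S hS h1 h2 => frame_even hframe hS h1 h2) m'
            (fun i => skewPart_skew (A i))
        rw [this, abs_zero]
        positivity
      · have hb : ∀ i : Fin 3, ‖s.piecewise m m' i‖ ≤ 1 := by
          intro i
          by_cases hi : i ∈ s
          · rw [s.piecewise_eq_of_mem _ _ hi]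
            exact le_trans (hNorm_bounds hh (hA i)).1 hh1
          · rw [s.piecewise_eq_of_notMem _ _ hi]
            exact (hNorm_bounds hh (hA i)).2
        have hprod : ∏ i : Fin 3, ‖s.piecewise m m' i‖ ≤ h := by
          rw [← Finset.mul_prod_erase Finset.univ _ (Finset.mem_univ i₀)]
          have h1 : ‖s.piecewise m m' i₀‖ ≤ h := by
            rw [s.piecewise_eq_of_mem _ _ hi₀]
            exact (hNorm_bounds hh (hA i₀)).1
          have h2 : ∏ i ∈ Finset.univ.erase i₀, ‖s.piecewise m m' i‖ ≤ 1 :=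
            Finset.prod_le_one (fun i _ => norm_nonneg _) (fun i _ => hb i)
          calc ‖s.piecewise m m' i₀‖ * ∏ i ∈ Finset.univ.erase i₀, ‖s.piecewise m m' i‖
              ≤ h * 1 := by
                refine mul_le_mul h1 h2 (Finset.prod_nonneg fun i _ => norm_nonneg _) hh.le
            _ = h := mul_one h
        calc |T0 (s.piecewise m m')| = ‖T0 (s.piecewise m m')‖ := (Real.norm_eq_abs _).symm
          _ ≤ ‖T0‖ * ∏ i, ‖s.piecewise m m' i‖ := T0.le_opNorm _
          _ ≤ ‖T0‖ * h := mul_le_mul_of_nonneg_left hprod (norm_nonneg _)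
    calc |T0 A| ≤ ∑ s : Finset (Fin 3), |T0 (s.piecewise m m')| := by
          rw [hsum]; exact Finset.abs_sum_le_sum_abs _ _
      _ ≤ ∑ _s : Finset (Fin 3), ‖T0‖ * h := Finset.sum_le_sum fun s _ => hterm s
      _ = 8 * (‖T0‖ * h) := by
          rw [Finset.sum_const, Finset.card_univ]
          simp [Fintype.card_finset]
      _ ≤ C * h := by
          have h2 : (0:ℝ) ≤ max M 0 := le_max_right _ _
          nlinarith [norm_nonneg T0]
end
end
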